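/- arXiv:1904.02337 — 2 statements merged into one kernel-verified Lean document; each statement's English description precedes it below -/
import Mathlib

section
/- Let n ≥ 2 be an integer and let f : [0,1] → ℝ^{n−1} be Lipschitz with Lipschitz constant 1/10. Write P(t) = (t, f(t)) ∈ ℝ^n and define Z = {(x_1, x_2, x_3) ∈ [0,1]^3 : x_1, x_2, x_3 pairwise distinct and ‖P(x_3) − P(x_1)‖ = ‖P(x_3) − P(x_2)‖}. Then there is a constant C depending only on n such that for every dyadic length δ ∈ (0, 1/2], #B_δ^3(Z) ≤ C·δ^{−2}·log(1/δ). In particular, Z has lower Minkowski dimension at most 2. -/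
/-
Let `P t = (t, f t)`. If `x` and `x'` are isosceles triples whose base points `x 0, x 1` and
`x' 0, x' 1` are `ε`-close, then polarization gives
`2 ⟪P (x' 2) - P (x 2), P (x 1) - P (x 0)⟫ = O(ε)`, while the Lipschitz bound `1/10` makes this
inner product comparable to `(x' 2 - x 2) (x 1 - x 0)`. So the apex is determined up to
`O(ε / |x 1 - x 0|)`: over a pair of base cubes of sidelength `δ` whose indices differ by `d`
there are `O(1 + δ⁻¹ / (d + 1))` apex cubes. Summing over the `O(δ⁻²)` pairs of base cubes gives a
harmonic sum, hence `O(δ⁻² log (1 / δ))` cubes in total, and taking logarithms along `δ = 2⁻ᵏ`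
bounds the lower Minkowski dimension by `2`.
-/

open Filter Set

noncomputable section

/-- A dyadic length: a real number of the form `2 ^ (-k)` for a natural number `k`. -/
def IsDyadicLength (l : ℝ) : Prop := ∃ k : ℕ, l = (2 : ℝ) ^ (-(k : ℤ))

/-- The half-open dyadic cube of sidelength `l` with corner `l • m`. -/
def dyadicCube {ι : Type*} (l : ℝ) (m : ι → ℤ) : Set (ι → ℝ) :=
  {x | ∀ i, l * (m i : ℝ) ≤ x i ∧ x i < l * ((m i : ℝ) + 1)}

/-- The (indices of the) cubes of `B_l` that intersect `E`. -/
def cubesMeeting {ι : Type*} (l : ℝ) (E : Set (ι → ℝ)) : Set (ι → ℤ) :=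
  {m | (dyadicCube l m ∩ E).Nonempty}

/-- `#B_l(E)`, the number of cubes of sidelength `l` meeting `E`. -/
def cubeCount {ι : Type*} (l : ℝ) (E : Set (ι → ℝ)) : ℕ :=
  (cubesMeeting l E).ncard

/-- `E` is a union of cubes of `B_l`. -/
def IsCubeUnion {ι : Type*} (l : ℝ) (E : Set (ι → ℝ)) : Prop :=
  ∃ S : Set (ι → ℤ), E = ⋃ m ∈ S, dyadicCube l m

/-- Lower Minkowski dimension, computed along dyadic scales. -/
def lowerMinkDim {ι : Type*} (Z : Set (ι → ℝ)) : ℝ :=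
  Filter.atTop.liminf fun k : ℕ =>
    Real.log (cubeCount ((2 : ℝ) ^ (-(k : ℤ))) Z) / (k * Real.log 2)

/-- The unit cube `[0,1)^d`. -/
def unitCube (d : ℕ) : Set (Fin d → ℝ) := {x | ∀ i, x i ∈ Set.Ico (0 : ℝ) 1}

/-- `X^n`, viewed inside `ℝ^{dn} = (Fin n × Fin d → ℝ)`. -/
def nthPower {d n : ℕ} (X : Set (Fin d → ℝ)) : Set (Fin n × Fin d → ℝ) :=
  {y | ∀ j, (fun i => y (j, i)) ∈ X}

/-- The point `(x_1, …, x_n) ∈ ℝ^{dn}` built from `x_1, …, x_n ∈ ℝ^d`. -/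
def tuple {d n : ℕ} (x : Fin n → Fin d → ℝ) : Fin n × Fin d → ℝ := fun p => x p.1 p.2

/-- The `j`-th factor of a cube index in `B_l^{dn}`. -/
def cubeRow {d n : ℕ} (M : Fin n × Fin d → ℤ) (j : Fin n) : Fin d → ℤ := fun i => M (j, i)

/-- A cube of `B_l^{dn}` is strongly non-diagonal if its `n` factors are pairwise distinct. -/
def StronglyNonDiagonal {d n : ℕ} (M : Fin n × Fin d → ℤ) : Prop :=
  Function.Injective (cubeRow M)

/-- The point `(t, f t) ∈ ℝ^{m+1}` on the graph of `f : ℝ → ℝ^m`. -/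
def graphPoint {m : ℕ} (f : ℝ → EuclideanSpace ℝ (Fin m)) (t : ℝ) :
    EuclideanSpace ℝ (Fin (m + 1)) :=
  (WithLp.equiv 2 (Fin (m + 1) → ℝ)).symm (Fin.cons t (WithLp.equiv 2 (Fin m → ℝ) (f t)))

/-- The set of triples `(x₁, x₂, x₃) ∈ [0,1]³` of pairwise distinct points whose images on
the graph of `f` form the vertices of an isosceles triangle (apex at the third point). -/
def isoTriples {m : ℕ} (f : ℝ → EuclideanSpace ℝ (Fin m)) : Set (Fin 3 → ℝ) :=
  {x | (∀ i, x i ∈ Set.Icc (0 : ℝ) 1) ∧ x 0 ≠ x 1 ∧ x 0 ≠ x 2 ∧ x 1 ≠ x 2 ∧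
    ‖graphPoint f (x 2) - graphPoint f (x 0)‖ = ‖graphPoint f (x 2) - graphPoint f (x 1)‖}

theorem abs_sq_norm_sub_sq_norm_le {E : Type*} [SeminormedAddCommGroup E] (x y : E) :
    |‖x‖ ^ 2 - ‖y‖ ^ 2| ≤ ‖x - y‖ * (‖x‖ + ‖y‖) := by
  rw [sq_sub_sq, abs_mul, abs_of_nonneg (by positivity : 0 ≤ ‖x‖ + ‖y‖), mul_comm]
  gcongr
  exact abs_norm_sub_norm_le x y

theorem two_mul_abs_inner_sub_le_of_equidistant {E : Type*} [NormedAddCommGroup E]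
    [InnerProductSpace ℝ E] {A B T A' B' T' : E} (h : ‖T - A‖ = ‖T - B‖)
    (h' : ‖T' - A'‖ = ‖T' - B'‖) :
    2 * |inner ℝ (T' - T) (B - A)| ≤
      ‖A' - A‖ * (‖T' - A‖ + ‖T' - A'‖) + ‖B' - B‖ * (‖T' - B‖ + ‖T' - B'‖) := by
  have polarization : 2 * inner ℝ (T' - T) (B - A)
      = (‖T' - A‖ ^ 2 - ‖T' - A'‖ ^ 2) - (‖T' - B‖ ^ 2 - ‖T' - B'‖ ^ 2) := by
    rw [← sq_eq_sq₀ (norm_nonneg _) (norm_nonneg _)] at h h'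
    simp only [norm_sub_sq_real, inner_sub_left, inner_sub_right, real_inner_comm] at h h' ⊢
    linarith
  have hA := abs_sq_norm_sub_sq_norm_le (T' - A) (T' - A')
  have hB := abs_sq_norm_sub_sq_norm_le (T' - B) (T' - B')
  rw [sub_sub_sub_cancel_left] at hA hB
  calc 2 * |inner ℝ (T' - T) (B - A)| = |2 * inner ℝ (T' - T) (B - A)| := by
        rw [abs_mul, abs_two]
    _ ≤ _ := by
      rw [polarization]
      exact (abs_sub _ _).trans (add_le_add hA hB)

section graph

variable {m : ℕ} (f : ℝ → EuclideanSpace ℝ (Fin m))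

theorem inner_graphPoint_sub (s u b a : ℝ) :
    inner ℝ (graphPoint f s - graphPoint f u) (graphPoint f b - graphPoint f a)
      = (s - u) * (b - a) + inner ℝ (f s - f u) (f b - f a) := by
  simp [graphPoint, PiLp.inner_apply, Fin.sum_univ_succ]
  ring

theorem norm_graphPoint_sub_sq (s u : ℝ) :
    ‖graphPoint f s - graphPoint f u‖ ^ 2 = (s - u) ^ 2 + ‖f s - f u‖ ^ 2 := by
  rw [← real_inner_self_eq_norm_sq, ← real_inner_self_eq_norm_sq, inner_graphPoint_sub, sq]

variable {f} {K : NNReal} {S : Set ℝ}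

theorem LipschitzOnWith.norm_graphPoint_sub_le (hf : LipschitzOnWith K f S) {s u : ℝ}
    (hs : s ∈ S) (hu : u ∈ S) :
    ‖graphPoint f s - graphPoint f u‖ ≤ (1 + K) * |s - u| := by
  have hfsu : ‖f s - f u‖ ≤ K * |s - u| := by
    simpa [dist_eq_norm, Real.dist_eq] using hf.dist_le_mul s hs u hu
  refine le_of_sq_le_sq ?_ (by positivity)
  rw [norm_graphPoint_sub_sq, mul_pow, sq_abs]
  nlinarith [norm_nonneg (f s - f u), abs_nonneg (s - u), sq_abs (s - u), K.2]

theorem LipschitzOnWith.mul_abs_le_abs_inner_graphPoint_sub (hf : LipschitzOnWith K f S)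
    {s u b a : ℝ} (hs : s ∈ S) (hu : u ∈ S) (hb : b ∈ S) (ha : a ∈ S) :
    (1 - K ^ 2) * (|s - u| * |b - a|) ≤
      |inner ℝ (graphPoint f s - graphPoint f u) (graphPoint f b - graphPoint f a)| := by
  have hsu : ‖f s - f u‖ ≤ K * |s - u| := by
    simpa [dist_eq_norm, Real.dist_eq] using hf.dist_le_mul s hs u hu
  have hba : ‖f b - f a‖ ≤ K * |b - a| := by
    simpa [dist_eq_norm, Real.dist_eq] using hf.dist_le_mul b hb a ha
  have hinner : |inner ℝ (f s - f u) (f b - f a)| ≤ K ^ 2 * (|s - u| * |b - a|) :=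
    calc _ ≤ ‖f s - f u‖ * ‖f b - f a‖ := abs_real_inner_le_norm _ _
      _ ≤ (K * |s - u|) * (K * |b - a|) := by gcongr
      _ = _ := by ring
  rw [inner_graphPoint_sub]
  have := abs_sub_abs_le_abs_add ((s - u) * (b - a)) (inner ℝ (f s - f u) (f b - f a))
  rw [abs_mul] at this
  linarith

end graph

theorem abs_sub_sub_lt_of_mem_dyadicCube {ι : Type*} {l : ℝ} {M M' : ι → ℤ} {z z' : ι → ℝ}
    (hz : z ∈ dyadicCube l M) (hz' : z' ∈ dyadicCube l M') (i j : ι) :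
    |z i - z' j - l * (M i - M' j)| < l := by
  obtain ⟨hi, hi'⟩ := hz i
  obtain ⟨hj, hj'⟩ := hz' j
  rw [abs_sub_lt_iff]
  constructor <;> linarith

theorem mul_abs_sub_sub_one_le_abs_sub_of_mem_dyadicCube {ι : Type*} {l : ℝ} (hl : 0 < l)
    {M M' : ι → ℤ} {z z' : ι → ℝ} (hz : z ∈ dyadicCube l M) (hz' : z' ∈ dyadicCube l M')
    (i j : ι) : l * (|(M i : ℝ) - M' j| - 1) ≤ |z i - z' j| := by
  have h := abs_sub_abs_le_abs_sub (l * (M i - M' j)) (z i - z' j)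
  rw [abs_sub_comm (l * _), abs_mul, abs_of_pos hl] at h
  linarith [abs_sub_sub_lt_of_mem_dyadicCube hz hz' i j]

theorem nonneg_and_le_inv_of_mem_cubesMeeting {ι : Type*} {l : ℝ} (hl : 0 < l)
    {E : Set (ι → ℝ)} (hE : ∀ x ∈ E, ∀ i, x i ∈ Icc (0 : ℝ) 1) {M : ι → ℤ}
    (hM : M ∈ cubesMeeting l E) (i : ι) : 0 ≤ M i ∧ (M i : ℝ) ≤ l⁻¹ := by
  obtain ⟨x, hx, hxE⟩ := hM
  obtain ⟨hlo, hhi⟩ := hx i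
  obtain ⟨h0, h1⟩ := hE x hxE i
  refine ⟨?_, by rw [← one_div, le_div_iff₀' hl]; linarith⟩
  have : (-1 : ℝ) < M i := by linarith [(mul_pos_iff_of_pos_left hl).1 (h0.trans_lt hhi)]
  have : (-1 : ℤ) < M i := by exact_mod_cast this
  omega

theorem IsDyadicLength.pos {l : ℝ} (hl : IsDyadicLength l) : 0 < l := by
  obtain ⟨k, rfl⟩ := hl
  positivity

theorem Finset.card_le_of_forall_sub_le {s : Finset ℤ} {W : ℝ} (hW : 0 ≤ W)
    (h : ∀ x ∈ s, ∀ y ∈ s, (x - y : ℝ) ≤ W) : (s.card : ℝ) ≤ W + 1 := by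
  rcases s.eq_empty_or_nonempty with rfl | hs
  · simp; linarith
  have hcard := Finset.card_le_card (t := Finset.Icc (s.min' hs) (s.max' hs)) fun x hx ↦
    Finset.mem_Icc.2 ⟨s.min'_le x hx, s.le_max' x hx⟩
  have hIcc := Int.card_Icc_of_le _ _ (by linarith [s.min'_le_max' hs] : s.min' hs ≤ s.max' hs + 1)
  have : (s.card : ℝ) ≤ s.max' hs + 1 - s.min' hs := by exact_mod_cast hIcc ▸ Int.ofNat_le.2 hcard
  linarith [h _ (s.max'_mem hs) _ (s.min'_mem hs)]

theorem sum_Icc_natAbs_sub_le {g : ℕ → ℝ} (hg : ∀ j, 0 ≤ g j) {N : ℕ} {p : ℤ}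
    (hp : p ∈ Finset.Icc (0 : ℤ) N) :
    ∑ q ∈ Finset.Icc (0 : ℤ) N, g (p - q).natAbs ≤ 2 * ∑ j ∈ Finset.range (N + 1), g j := by
  classical
  rw [Finset.sum_comp, Finset.mul_sum]
  refine (Finset.sum_le_sum fun j _ ↦ ?_).trans
    (Finset.sum_le_sum_of_subset_of_nonneg ?_ fun j _ _ ↦ mul_nonneg zero_le_two (hg j))
  · have hfib : {q ∈ Finset.Icc (0 : ℤ) N | (p - q).natAbs = j}.card ≤ 2 :=
      (Finset.card_le_card (t := {p - j, p + j}) fun q hq ↦ by simp at hq ⊢; omega).trans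
        Finset.card_le_two
    rw [nsmul_eq_mul]
    gcongr
    · exact hg j
    · exact_mod_cast hfib
  · intro j hj
    simp only [Finset.mem_image, Finset.mem_Icc] at hj hp
    simp only [Finset.mem_range]
    omega

theorem sum_Icc_sum_Icc_inv_abs_sub_add_one_le (N : ℕ) :
    ∑ p ∈ Finset.Icc (0 : ℤ) N, ∑ q ∈ Finset.Icc (0 : ℤ) N, (((|p - q| : ℤ) : ℝ) + 1)⁻¹ ≤
      2 * (N + 1) * (1 + Real.log (N + 1)) := by
  have hharm : ∑ j ∈ Finset.range (N + 1), ((j : ℝ) + 1)⁻¹ ≤ 1 + Real.log (N + 1) := by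
    simpa [harmonic] using harmonic_le_one_add_log (N + 1)
  calc _ ≤ ∑ _p ∈ Finset.Icc (0 : ℤ) N, 2 * (1 + Real.log (N + 1)) := by
        refine Finset.sum_le_sum fun p hp ↦ ?_
        have := sum_Icc_natAbs_sub_le (g := fun j ↦ ((j : ℝ) + 1)⁻¹) (by intro; positivity) hp
        simp only [Nat.cast_natAbs] at this
        linarith
    _ = _ := by simp; ring

section isoTriples

variable {m : ℕ} {f : ℝ → EuclideanSpace ℝ (Fin m)}

theorem LipschitzOnWith.norm_graphPoint_sub_le_of_mem_Icc
    (hf : LipschitzOnWith (1 / 10) f (Icc 0 1)) {u v : ℝ} (hu : u ∈ Icc (0 : ℝ) 1)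
    (hv : v ∈ Icc (0 : ℝ) 1) :
    ‖graphPoint f u - graphPoint f v‖ ≤ 11 / 10 * |u - v| := by
  simpa [add_comm, one_div] using (hf.norm_graphPoint_sub_le hu hv).trans_eq (by norm_num)

theorem abs_sub_mul_abs_sub_le_of_mem_isoTriples (hf : LipschitzOnWith (1 / 10) f (Icc 0 1))
    {x x' : Fin 3 → ℝ} (hx : x ∈ isoTriples f) (hx' : x' ∈ isoTriples f) {ε : ℝ}
    (h0 : |x 0 - x' 0| ≤ ε) (h1 : |x 1 - x' 1| ≤ ε) :
    |x 2 - x' 2| * |x 0 - x 1| ≤ 3 * ε := by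
  obtain ⟨hI, -, -, -, hiso⟩ := hx
  obtain ⟨hI', -, -, -, hiso'⟩ := hx'
  have hP := fun i j ↦ hf.norm_graphPoint_sub_le_of_mem_Icc (hI' i) (hI j)
  have hP' := fun i j ↦ hf.norm_graphPoint_sub_le_of_mem_Icc (hI' i) (hI' j)
  have hdiam : ∀ u ∈ Icc (0 : ℝ) 1, ∀ v ∈ Icc (0 : ℝ) 1, |u - v| ≤ 1 := fun u hu v hv ↦
    abs_sub_le_iff.2 ⟨by linarith [hu.2, hv.1], by linarith [hu.1, hv.2]⟩
  have upper := two_mul_abs_inner_sub_le_of_equidistant hiso hiso'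
  have lower := hf.mul_abs_le_abs_inner_graphPoint_sub (hI' 2) (hI 2) (hI 1) (hI 0)
  rw [abs_sub_comm (x' 2), abs_sub_comm (x 1)] at lower
  rw [abs_sub_comm] at h0 h1
  have hA : ‖graphPoint f (x' 0) - graphPoint f (x 0)‖ ≤ 11 / 10 * ε := (hP 0 0).trans (by gcongr)
  have hB : ‖graphPoint f (x' 1) - graphPoint f (x 1)‖ ≤ 11 / 10 * ε := (hP 1 1).trans (by gcongr)
  have hR : ∀ i j, ‖graphPoint f (x' i) - graphPoint f (x j)‖ ≤ 11 / 10 := fun i j ↦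
    (hP i j).trans (by linarith [hdiam _ (hI' i) _ (hI j)])
  have hR' : ∀ i j, ‖graphPoint f (x' i) - graphPoint f (x' j)‖ ≤ 11 / 10 := fun i j ↦
    (hP' i j).trans (by linarith [hdiam _ (hI' i) _ (hI' j)])
  have hε : 0 ≤ ε := (abs_nonneg _).trans h0
  have := add_le_add (mul_le_mul hA (add_le_add (hR 2 0) (hR' 2 0)) (by positivity) (by positivity))
    (mul_le_mul hB (add_le_add (hR 2 1) (hR' 2 1)) (by positivity) (by positivity))
  norm_num at lower
  -- `2 · (99/100) · |x 2 - x' 2| · |x 0 - x 1| ≤ 2 · (11/10) ε · (22/10)`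
  nlinarith

theorem sub_le_of_mem_cubesMeeting_isoTriples (hf : LipschitzOnWith (1 / 10) f (Icc 0 1))
    {δ : ℝ} (hδ : 0 < δ) {M M' : Fin 3 → ℤ} (hM : M ∈ cubesMeeting δ (isoTriples f))
    (hM' : M' ∈ cubesMeeting δ (isoTriples f)) (h0 : M 0 = M' 0) (h1 : M 1 = M' 1) :
    (M 2 - M' 2 : ℝ) ≤ 1 + 9 * δ⁻¹ / ((|M 0 - M 1| : ℤ) + 1) := by
  set d : ℤ := |M 0 - M 1|
  by_cases hd : d ≤ 1
  · have hd1 : (d : ℝ) ≤ 1 := by exact_mod_cast hd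
    have hbound : δ⁻¹ ≤ 9 * δ⁻¹ / (d + 1) := by
      rw [le_div_iff₀ (by positivity)]
      nlinarith [inv_pos.2 hδ]
    have hle := (nonneg_and_le_inv_of_mem_cubesMeeting hδ (fun _ hx ↦ hx.1) hM 2).2
    have hge : (0 : ℝ) ≤ M' 2 := by
      exact_mod_cast (nonneg_and_le_inv_of_mem_cubesMeeting hδ (fun _ hx ↦ hx.1) hM' 2).1
    linarith
  obtain ⟨z, hz, hzZ⟩ := hM
  obtain ⟨z', hz', hzZ'⟩ := hM'
  have hd2 : (2 : ℝ) ≤ d := by exact_mod_cast (by omega : 2 ≤ d)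
  have near : ∀ i, M i = M' i → |z i - z' i| ≤ δ := fun i hi ↦ by
    simpa [hi] using (abs_sub_sub_lt_of_mem_dyadicCube hz hz' i i).le
  have stable := abs_sub_mul_abs_sub_le_of_mem_isoTriples hf hzZ hzZ' (near 0 h0) (near 1 h1)
  have base : δ * (d - 1) ≤ |z 0 - z 1| := by
    simpa [d] using mul_abs_sub_sub_one_le_abs_sub_of_mem_dyadicCube hδ hz hz 0 1
  set r : ℝ := M 2 - M' 2 - 1
  have apex : δ * r ≤ |z 2 - z' 2| :=
    (mul_le_mul_of_nonneg_left (by linarith [le_abs_self ((M 2 : ℝ) - M' 2)]) hδ.le).trans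
      (mul_abs_sub_sub_one_le_abs_sub_of_mem_dyadicCube hδ hz hz' 2 2)
  -- `stable` gives `r ≤ 3 δ⁻¹ / (d - 1)`, and `3 / (d - 1) ≤ 9 / (d + 1)` as `d ≥ 2`.
  suffices r ≤ 9 * δ⁻¹ / (d + 1) by linarith
  rcases le_or_gt r 0 with hr | hr
  · exact hr.trans (by positivity)
  have hrd : r * (d - 1) ≤ 3 * δ⁻¹ := by
    rw [← div_eq_mul_inv, le_div_iff₀ hδ]
    nlinarith [mul_le_mul apex base (by nlinarith) (abs_nonneg _)]
  rw [le_div_iff₀ (by positivity)]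
  nlinarith

theorem card_filter_cubesMeeting_isoTriples_le (hf : LipschitzOnWith (1 / 10) f (Icc 0 1))
    {δ : ℝ} (hδ : 0 < δ) {T : Finset (Fin 3 → ℤ)}
    (hT : ∀ M ∈ T, M ∈ cubesMeeting δ (isoTriples f)) (p q : ℤ) :
    ({M ∈ T | (M 0, M 1) = (p, q)}.card : ℝ) ≤ 2 + 9 * δ⁻¹ / ((|p - q| : ℤ) + 1) := by
  set F := {M ∈ T | (M 0, M 1) = (p, q)}
  have hF : ∀ M ∈ F, M ∈ cubesMeeting δ (isoTriples f) ∧ M 0 = p ∧ M 1 = q := by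
    intro M hM
    obtain ⟨hMT, hpq⟩ := Finset.mem_filter.1 hM
    exact ⟨hT M hMT, Prod.ext_iff.1 hpq⟩
  have hinj : Set.InjOn (fun M : Fin 3 → ℤ ↦ M 2) F := by
    intro M hM M' hM' h
    obtain ⟨-, hM0, hM1⟩ := hF M hM
    obtain ⟨-, hM0', hM1'⟩ := hF M' hM'
    ext i
    fin_cases i
    exacts [hM0.trans hM0'.symm, hM1.trans hM1'.symm, h]
  rw [← Finset.card_image_of_injOn hinj]
  refine (Finset.card_le_of_forall_sub_le (W := 1 + 9 * δ⁻¹ / ((|p - q| : ℤ) + 1))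
    (by positivity) ?_).trans_eq (by ring)
  simp only [Finset.mem_image]
  rintro _ ⟨M, hM, rfl⟩ _ ⟨M', hM', rfl⟩
  obtain ⟨hMZ, hM0, hM1⟩ := hF M hM
  obtain ⟨hMZ', hM0', hM1'⟩ := hF M' hM'
  simpa [hM0, hM1] using
    sub_le_of_mem_cubesMeeting_isoTriples hf hδ hMZ hMZ' (hM0.trans hM0'.symm)
      (hM1.trans hM1'.symm)

theorem cubeCount_isoTriples_le_sum (hf : LipschitzOnWith (1 / 10) f (Icc 0 1)) {δ : ℝ}
    (hδ : 0 < δ) :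
    (cubeCount δ (isoTriples f) : ℝ) ≤ ∑ p ∈ Finset.Icc (0 : ℤ) ⌊δ⁻¹⌋₊,
      ∑ q ∈ Finset.Icc (0 : ℤ) ⌊δ⁻¹⌋₊, (2 + 9 * δ⁻¹ / ((|p - q| : ℤ) + 1)) := by
  classical
  set box := Finset.Icc (0 : ℤ) ⌊δ⁻¹⌋₊
  set T := (Fintype.piFinset fun _ : Fin 3 ↦ box).filter (· ∈ cubesMeeting δ (isoTriples f))
  have hT : cubesMeeting δ (isoTriples f) = T := by
    ext M
    suffices M ∈ cubesMeeting δ (isoTriples f) → ∀ i, M i ∈ box by simpa [T] using this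
    intro hM i
    obtain ⟨h0, hle⟩ := nonneg_and_le_inv_of_mem_cubesMeeting hδ (fun _ hx ↦ hx.1) hM i
    have : (M i : ℝ) < ⌊δ⁻¹⌋₊ + 1 := hle.trans_lt (Nat.lt_floor_add_one _)
    have : M i < ⌊δ⁻¹⌋₊ + 1 := by exact_mod_cast this
    simp only [box, Finset.mem_Icc]
    omega
  have hmaps : Set.MapsTo (fun M : Fin 3 → ℤ ↦ (M 0, M 1)) T ↑(box ×ˢ box) := by
    intro M hM
    have := (Finset.mem_filter.1 hM).1
    simp only [Fintype.mem_piFinset] at this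
    exact Finset.mem_product.2 ⟨this 0, this 1⟩
  rw [cubeCount, hT, Set.ncard_coe_finset, Finset.card_eq_sum_card_fiberwise hmaps,
    ← Finset.sum_product' box box, Nat.cast_sum]
  exact Finset.sum_le_sum fun pq _ ↦ card_filter_cubesMeeting_isoTriples_le hf hδ
    (fun M hM ↦ (Finset.mem_filter.1 hM).2) pq.1 pq.2

theorem cubeCount_isoTriples_le
    (hf : LipschitzOnWith (1 / 10) f (Icc 0 1)) {δ : ℝ} (hδ : 0 < δ) (hδ2 : δ ≤ 1 / 2) :
    (cubeCount δ (isoTriples f) : ℝ) ≤ 100 * δ⁻¹ ^ 2 * Real.log (1 / δ) := by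
  set N := ⌊δ⁻¹⌋₊
  set D := δ⁻¹
  have hD : 2 ≤ D := by rw [le_inv_comm₀ two_pos hδ]; linarith
  have hN : (N : ℝ) ≤ D := Nat.floor_le (by positivity)
  have hL : Real.log (1 / δ) = Real.log D := by rw [one_div]
  have hlog2 : Real.log 2 ≤ Real.log D := Real.log_le_log two_pos hD
  have hlogN : Real.log (N + 1) ≤ 2 * Real.log D := by
    calc Real.log (N + 1) ≤ Real.log (D ^ 2) := Real.log_le_log (by positivity) (by nlinarith)
      _ = 2 * Real.log D := by rw [Real.log_pow]; norm_num
  have hsum : ∑ p ∈ Finset.Icc (0 : ℤ) N, ∑ q ∈ Finset.Icc (0 : ℤ) N,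
      (2 + 9 * D / ((|p - q| : ℤ) + 1)) = 2 * (N + 1) ^ 2 +
      9 * D * ∑ p ∈ Finset.Icc (0 : ℤ) N, ∑ q ∈ Finset.Icc (0 : ℤ) N,
        (((|p - q| : ℤ) : ℝ) + 1)⁻¹ := by
    simp only [Finset.sum_add_distrib, div_eq_mul_inv, ← Finset.mul_sum]
    simp
    ring
  have hA : (N : ℝ) + 1 ≤ 3 / 2 * D := by linarith
  have hB : 0 ≤ 1 + Real.log (N + 1) := by
    linarith [Real.log_nonneg (by linarith : (1 : ℝ) ≤ N + 1)]
  calc (cubeCount δ (isoTriples f) : ℝ)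
      ≤ 2 * (N + 1) ^ 2 + 9 * D * (2 * (N + 1) * (1 + Real.log (N + 1))) :=
        (cubeCount_isoTriples_le_sum hf hδ).trans_eq hsum |>.trans (by
          gcongr; exact sum_Icc_sum_Icc_inv_abs_sub_add_one_le N)
    _ ≤ 2 * (3 / 2 * D) ^ 2 + 9 * D * (2 * (3 / 2 * D) * (1 + 2 * Real.log D)) := by
        gcongr
    _ ≤ 100 * D ^ 2 * Real.log (1 / δ) := by
        rw [hL]
        nlinarith [Real.log_two_gt_d9, mul_le_mul_of_nonneg_left hlog2 (sq_nonneg D)]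

end isoTriples

theorem tendsto_const_add_log_div_atTop (c : ℝ) :
    Tendsto (fun y ↦ (c + Real.log y) / y) atTop (nhds 0) := by
  have h := (tendsto_inv_atTop_zero.const_mul c).add
    Real.isLittleO_log_id_atTop.tendsto_div_nhds_zero
  rw [mul_zero, zero_add] at h
  exact h.congr fun y ↦ by simp only [id, add_div]; ring

theorem lowerMinkDim_le_of_cubeCount_le {ι : Type*} {Z : Set (ι → ℝ)} {C : ℝ} (hC : 0 < C)
    {s : ℕ} (h : ∀ δ : ℝ, IsDyadicLength δ → δ ≤ 1 / 2 →
      (cubeCount δ Z : ℝ) ≤ C * δ⁻¹ ^ s * Real.log (1 / δ)) :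
    lowerMinkDim Z ≤ s := by
  set x : ℕ → ℝ := fun k ↦ k * Real.log 2
  set w : ℕ → ℝ := fun k ↦ (Real.log C + Real.log (x k)) / x k
  have hw : Tendsto w atTop (nhds 0) := (tendsto_const_add_log_div_atTop _).comp
    (tendsto_natCast_atTop_atTop.atTop_mul_const (Real.log_pos one_lt_two))
  have hle : ∀ᶠ k : ℕ in atTop,
      Real.log (cubeCount ((2 : ℝ) ^ (-(k : ℤ))) Z) / (k * Real.log 2) ≤ s + |w k| := by
    filter_upwards [eventually_ge_atTop 1] with k hk
    have hxk : 0 < x k := by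
      have : (1 : ℝ) ≤ k := by exact_mod_cast hk
      positivity
    set δ : ℝ := (2 : ℝ) ^ (-(k : ℤ))
    have hδinv : δ⁻¹ = 2 ^ k := by simp [δ]
    have hδ2 : δ ≤ 1 / 2 := by
      rw [one_div, ← zpow_neg_one]
      exact zpow_le_zpow_right₀ one_le_two (by omega)
    have hcount := h δ ⟨k, rfl⟩ hδ2
    rw [one_div, hδinv, Real.log_pow] at hcount
    change Real.log (cubeCount δ Z) / x k ≤ s + |w k|
    rcases (cubeCount δ Z).eq_zero_or_pos with h0 | hpos
    · rw [h0, Nat.cast_zero, Real.log_zero, zero_div]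
      positivity
    have hlog : Real.log (cubeCount δ Z) ≤ Real.log C + s * x k + Real.log (x k) :=
      calc Real.log (cubeCount δ Z) ≤ Real.log (C * (2 ^ k) ^ s * x k) :=
            Real.log_le_log (by exact_mod_cast hpos) hcount
        _ = _ := by
          rw [Real.log_mul (by positivity) hxk.ne', Real.log_mul hC.ne' (by positivity),
            Real.log_pow, Real.log_pow]
    calc Real.log (cubeCount δ Z) / x k ≤ (Real.log C + s * x k + Real.log (x k)) / x k := by
          gcongr
      _ = s + w k := by simp only [w]; field_simp; ring
      _ ≤ s + |w k| := by gcongr; exact le_abs_self _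
  calc lowerMinkDim Z ≤ atTop.liminf fun k ↦ (s : ℝ) + |w k| :=
        liminf_le_liminf hle
          (isBoundedUnder_of ⟨0, fun k ↦ div_nonneg (Real.log_natCast_nonneg _) (by positivity)⟩)
          ((tendsto_const_nhds.add hw.abs)).isCoboundedUnder_ge
    _ = s := by simpa using (tendsto_const_nhds.add hw.abs).liminf_eq

theorem isoTriples_cover_count_general (m : ℕ) :
    ∃ C : ℝ, 0 < C ∧
      ∀ f : ℝ → EuclideanSpace ℝ (Fin m), LipschitzOnWith (1 / 10) f (Set.Icc 0 1) →
        (∀ δ : ℝ, IsDyadicLength δ → δ ≤ 1 / 2 →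
          (cubeCount δ (isoTriples f) : ℝ) ≤ C * δ⁻¹ ^ 2 * Real.log (1 / δ)) ∧
        lowerMinkDim (isoTriples f) ≤ 2 := by
  refine ⟨100, by norm_num, fun f hf ↦ ?_⟩
  have hcount : ∀ δ : ℝ, IsDyadicLength δ → δ ≤ 1 / 2 →
      (cubeCount δ (isoTriples f) : ℝ) ≤ 100 * δ⁻¹ ^ 2 * Real.log (1 / δ) :=
    fun _ hδ hδ2 ↦ cubeCount_isoTriples_le hf hδ.pos hδ2
  exact ⟨hcount, by exact_mod_cast lowerMinkDim_le_of_cubeCount_le (by norm_num) hcount⟩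

/-- **The covering estimate for `Z` (Section 5.2).** Here `n = m + 1 ≥ 2`. -/
theorem isoTriples_cover_count (m : ℕ) (hm : 1 ≤ m) :
    ∃ C : ℝ, 0 < C ∧
      ∀ f : ℝ → EuclideanSpace ℝ (Fin m), LipschitzOnWith (1 / 10) f (Set.Icc 0 1) →
        (∀ δ : ℝ, IsDyadicLength δ → δ ≤ 1 / 2 →
          (cubeCount δ (isoTriples f) : ℝ) ≤ C * δ⁻¹ ^ 2 * Real.log (1 / δ)) ∧
        lowerMinkDim (isoTriples f) ≤ 2 :=
  isoTriples_cover_count_general m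

end
end

section
/- Let n ≥ 2 be an integer, let f : [0,1] → ℝ^{n−1} be Lipschitz with Lipschitz constant 1/10, let v = (v_1, v') ∈ ℝ × ℝ^{n−1} be a unit vector with |v_1| ≥ 9/10, let a ∈ ℝ and ρ > 0. If x, x' ∈ [0,1] satisfy |v · (x, f(x)) − a| ≤ ρ and |v · (x', f(x')) − a| ≤ ρ (where · is the Euclidean inner product on ℝ^n), then |x − x'| ≤ (5/2)·ρ. -/
/-!
Write `v = (v₀, v')`. Then `⟪v, (x, f x)⟫ - ⟪v, (x', f x')⟫ = v₀ (x - x') + ⟪v', f x - f x'⟫`,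
and by Cauchy–Schwarz and the Lipschitz bound the second term is at most `‖v‖ |x - x'| / 10`.
Both points lie in a slab of width `2ρ`, so `(9/10 - 1/10) |x - x'| ≤ 2ρ`.
-/

open Filter Set

noncomputable section

def EuclideanSpace.tail {m : ℕ} (v : EuclideanSpace ℝ (Fin (m + 1))) :
    EuclideanSpace ℝ (Fin m) :=
  WithLp.toLp 2 fun i => v i.succ

namespace EuclideanSpace

theorem norm_tail_le {m : ℕ} (v : EuclideanSpace ℝ (Fin (m + 1))) : ‖tail v‖ ≤ ‖v‖ := by
  rw [norm_eq, norm_eq, Fin.sum_univ_succ]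
  gcongr
  simp only [tail, PiLp.toLp_apply, le_add_iff_nonneg_left]
  positivity

end EuclideanSpace

open EuclideanSpace

theorem inner_graphPoint {m : ℕ} (v : EuclideanSpace ℝ (Fin (m + 1)))
    (f : ℝ → EuclideanSpace ℝ (Fin m)) (t : ℝ) :
    inner ℝ v (graphPoint f t) = v 0 * t + inner ℝ (tail v) (f t) := by
  simp only [graphPoint, tail, PiLp.inner_apply, RCLike.inner_apply, conj_trivial,
    WithLp.equiv_symm_apply, WithLp.equiv_apply, Fin.sum_univ_succ,
    Fin.cons_zero, Fin.cons_succ]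
  ring

theorem mul_abs_sub_le_abs_inner_graphPoint_sub {m : ℕ} {K : NNReal} {s : Set ℝ}
    {f : ℝ → EuclideanSpace ℝ (Fin m)} (hf : LipschitzOnWith K f s)
    (v : EuclideanSpace ℝ (Fin (m + 1))) {x x' : ℝ} (hx : x ∈ s) (hx' : x' ∈ s) :
    (|v 0| - K * ‖v‖) * |x - x'| ≤
      |inner ℝ v (graphPoint f x) - inner ℝ v (graphPoint f x')| := by
  have hsplit : inner ℝ v (graphPoint f x) - inner ℝ v (graphPoint f x') =
      v 0 * (x - x') + inner ℝ (tail v) (f x - f x') := by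
    rw [inner_graphPoint, inner_graphPoint, inner_sub_right]
    ring
  have htail : |inner ℝ (tail v) (f x - f x')| ≤ K * ‖v‖ * |x - x'| :=
    calc |inner ℝ (tail v) (f x - f x')|
        ≤ ‖tail v‖ * ‖f x - f x'‖ := abs_real_inner_le_norm _ _
      _ ≤ ‖v‖ * (K * |x - x'|) := by
          gcongr
          · exact norm_tail_le v
          · simpa [dist_eq_norm, Real.dist_eq] using hf.dist_le_mul x hx x' hx'
      _ = K * ‖v‖ * |x - x'| := by ring
  have hmain : |v 0| * |x - x'| ≤
      |inner ℝ v (graphPoint f x) - inner ℝ v (graphPoint f x')| + K * ‖v‖ * |x - x'| :=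
    calc |v 0| * |x - x'|
        = |(v 0 * (x - x') + inner ℝ (tail v) (f x - f x')) - inner ℝ (tail v) (f x - f x')| := by
          rw [add_sub_cancel_right, abs_mul]
      _ ≤ _ := (abs_sub _ _).trans (by rw [hsplit]; gcongr)
  linarith

theorem lipschitz_graph_slab_general (m : ℕ)
    (f : ℝ → EuclideanSpace ℝ (Fin m)) (hf : LipschitzOnWith (1 / 10) f (Set.Icc 0 1))
    (v : EuclideanSpace ℝ (Fin (m + 1))) (hv : ‖v‖ = 1) (hv1 : 9 / 10 ≤ |v 0|)
    (a ρ : ℝ)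
    (x x' : ℝ) (hx : x ∈ Set.Icc (0 : ℝ) 1) (hx' : x' ∈ Set.Icc (0 : ℝ) 1)
    (h1 : |inner (𝕜 := ℝ) v (graphPoint f x) - a| ≤ ρ)
    (h2 : |inner (𝕜 := ℝ) v (graphPoint f x') - a| ≤ ρ) :
    |x - x'| ≤ (5 / 2) * ρ := by
  have hwidth := mul_abs_sub_le_abs_inner_graphPoint_sub hf v hx hx'
  have hslab : |inner ℝ v (graphPoint f x) - inner ℝ v (graphPoint f x')| ≤ 2 * ρ := by
    linarith [abs_sub_le (inner ℝ v (graphPoint f x)) a (inner ℝ v (graphPoint f x')),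
      abs_sub_comm a (inner ℝ v (graphPoint f x'))]
  have hgap : 4 / 5 * |x - x'| ≤ (|v 0| - (1 / 10 : NNReal) * ‖v‖) * |x - x'| := by
    gcongr
    rw [hv]
    norm_num
    linarith
  linarith

/-- **The slab intersection estimate from the proof of Theorem 5.2.** Here `n = m + 1 ≥ 2`,
and the slab is `{z : |v ⬝ z - a| ≤ ρ}` for a unit vector `v` with `|v₁| ≥ 9/10`. -/
theorem lipschitz_graph_slab (m : ℕ) (hm : 1 ≤ m)
    (f : ℝ → EuclideanSpace ℝ (Fin m)) (hf : LipschitzOnWith (1 / 10) f (Set.Icc 0 1))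
    (v : EuclideanSpace ℝ (Fin (m + 1))) (hv : ‖v‖ = 1) (hv1 : 9 / 10 ≤ |v 0|)
    (a ρ : ℝ) (hρ : 0 < ρ)
    (x x' : ℝ) (hx : x ∈ Set.Icc (0 : ℝ) 1) (hx' : x' ∈ Set.Icc (0 : ℝ) 1)
    (h1 : |inner (𝕜 := ℝ) v (graphPoint f x) - a| ≤ ρ)
    (h2 : |inner (𝕜 := ℝ) v (graphPoint f x') - a| ≤ ρ) :
    |x - x'| ≤ (5 / 2) * ρ :=
  lipschitz_graph_slab_general m f hf v hv hv1 a ρ x x' hx hx' h1 h2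

end
end
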